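/- Let g be a normalized arithmetic function and let 1 ≤ m < n be integers. Then A_{n,m}^{g,id} = Σ_{μ ⊢ n−m} 𝓖(μ) · (∏_{k=0}^{|μ|+ℓ(μ)−1} (n − k)) · Σ_{λ ∈ Orb(μ)} ∏_{k=1}^{ℓ(λ)} (k + Σ_{i=1}^{k} λ_i)^{−1}, where the outer sum runs over all partitions μ of n − m. -/

import Mathlib

open Finset Polynomial

/-- The recursively defined polynomials `P_n^{g,h}` attached to arithmetic functions
`g, h : ℕ → ℝ` (values at `0` are irrelevant): `P_0 = 1` and
`P_n(x) = (x / h(n)) · Σ_{k=1}^n g(k) · P_{n-k}(x)`. -/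
noncomputable def Ppoly (g h : ℕ → ℝ) : ℕ → Polynomial ℝ
  | 0 => 1
  | (n+1) => Polynomial.C (h (n+1))⁻¹ * Polynomial.X *
      ∑ k ∈ Finset.range (n+1), Polynomial.C (g (k+1)) * Ppoly g h (n - k)
  termination_by n => n
  decreasing_by all_goals simp_wf <;> omega

/-- `A_{n,m}^{g,h}`: the coefficient of `x^m` in `(∏_{k=1}^n h(k)) · P_n^{g,h}(x)`. -/
noncomputable def Acoeff (g h : ℕ → ℝ) (n m : ℕ) : ℝ :=
  (∏ k ∈ Finset.Icc 1 n, h k) * (Ppoly g h n).coeff m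

/-- `h` extended by the convention `h(0) := 0`. -/
noncomputable def hExt (h : ℕ → ℝ) (n : ℕ) : ℝ := if n = 0 then 0 else h n

/-- `h_m(n) = ∏_{k=0}^{m-1} h(n-k)` (with the convention `h(0) := 0`). -/
noncomputable def hIter (h : ℕ → ℝ) (m n : ℕ) : ℝ :=
  ∏ k ∈ Finset.range m, hExt h (n - k)

/-- Helper for `H(μ,n)`: defined on reversed compositions, peeling off the head
(which is the last part `μ_{r+1}` of the original composition). -/
noncomputable def Hrev (h : ℕ → ℝ) : List ℕ → ℕ → ℝ
  | [], _ => 1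
  | (a :: t), n =>
      if n < (a :: t).sum + (a :: t).length then 0
      else ∑ k ∈ Finset.Ico ((a :: t).sum + (a :: t).length - 1) n,
        hIter h a k * Hrev h t (k - a)

/-- `H(μ, n)` for a composition `μ` (a list of positive integers): `H(ε,n) = 1`,
`H(μ,n) = Σ_{k=|μ|+ℓ(μ)-1}^{n-1} h_{μ_{r+1}}(k) · H((μ_1,…,μ_r), k - μ_{r+1})`
if `n ≥ |μ| + ℓ(μ)`, and `0` otherwise. -/
noncomputable def HFun (h : ℕ → ℝ) (μ : List ℕ) (n : ℕ) : ℝ := Hrev h μ.reverse n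

/-- `𝓗(μ, n) = Σ_{λ ∈ Orb(μ)} H(λ, n)`: sum over all distinct rearrangements of `μ`. -/
noncomputable def HCal (h : ℕ → ℝ) (μ : List ℕ) (n : ℕ) : ℝ :=
  ∑ lam ∈ μ.permutations.toFinset, HFun h lam n

/-- `𝓖(μ) = ∏_{k=1}^{ℓ(μ)} g(μ_k + 1)`. -/
noncomputable def GCal (g : ℕ → ℝ) (μ : List ℕ) : ℝ := (μ.map (fun p => g (p + 1))).prod

/-!
For a composition `λ` write `w(λ) = 𝓖(λ) · ∏_k (k + λ_1 + ⋯ + λ_k)⁻¹` and `n^{(j)} = n(n-1)⋯(n-j+1)`.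
For `h = id` the defining recursion reads `A_{n+1,m+1} = Σ_k g(k+1) n^{(k)} A_{n-k,m}`, and induction
on `m` gives `A_{m+t,m} = Σ_{λ ⊨ t} w(λ) (m+t)^{(t+ℓ(λ))}`. Indeed the right-hand side obeys the same
recursion: its term `k = 0` is `Σ_λ w(λ) n^{(t+ℓ(λ))}` because `g(1) = 1`, appending `k ≥ 1` as a last
part multiplies `w` by `g(k+1)/(t+ℓ(λ))`, so the terms `k ≥ 1` give `Σ_λ w(λ) (t+ℓ(λ)) n^{(t+ℓ(λ)-1)}`,
and `(n+1)^{(j)} = n^{(j)} + j n^{(j-1)}` adds the two up. Grouping compositions by their underlying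
partition turns this into the sum over partitions and orbits.
-/

namespace Ppoly

variable (g h : ℕ → ℝ)

lemma zero : Ppoly g h 0 = 1 := by
  rw [Ppoly]

lemma succ (n : ℕ) : Ppoly g h (n + 1) =
    C (h (n + 1))⁻¹ * X * ∑ k ∈ range (n + 1), C (g (k + 1)) * Ppoly g h (n - k) := by
  rw [Ppoly]

lemma coeff_succ_zero (n : ℕ) : (Ppoly g h (n + 1)).coeff 0 = 0 := by
  rw [succ, mul_assoc, coeff_C_mul, mul_coeff_zero, coeff_X_zero, zero_mul, mul_zero]

lemma coeff_succ_succ (n m : ℕ) : (Ppoly g h (n + 1)).coeff (m + 1) =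
    (h (n + 1))⁻¹ * ∑ k ∈ range (n + 1), g (k + 1) * (Ppoly g h (n - k)).coeff m := by
  simp only [succ, mul_assoc, coeff_C_mul, coeff_X_mul, finsetSum_coeff]

lemma coeff_eq_zero_of_lt {n m : ℕ} (hnm : n < m) : (Ppoly g h n).coeff m = 0 := by
  induction n using Nat.strong_induction_on generalizing m with
  | _ n ih =>
    obtain ⟨m, rfl⟩ : ∃ m', m = m' + 1 := Nat.exists_eq_succ_of_ne_zero (by omega)
    rcases n with _ | n
    · simp [zero, coeff_one]
    · rw [coeff_succ_succ, sum_eq_zero, mul_zero]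
      intro k hk
      rw [ih (n - k) (by omega) (by omega), mul_zero]

end Ppoly

section NatCast

variable (g : ℕ → ℝ)

lemma Acoeff_natCast (n m : ℕ) :
    Acoeff g (fun k => (k : ℝ)) n m = n.factorial * (Ppoly g (fun k => (k : ℝ)) n).coeff m := by
  rw [Acoeff, ← Nat.cast_prod, ← Ico_add_one_right_eq_Icc, prod_Ico_id_eq_factorial]

lemma Acoeff_natCast_zero (t : ℕ) :
    Acoeff g (fun k => (k : ℝ)) t 0 = if t = 0 then 1 else 0 := by
  rcases t with _ | t
  · simp [Acoeff_natCast, Ppoly.zero]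
  · simp [Acoeff_natCast, Ppoly.coeff_succ_zero]

lemma Acoeff_natCast_eq_zero_of_lt {n m : ℕ} (hnm : n < m) :
    Acoeff g (fun k => (k : ℝ)) n m = 0 := by
  rw [Acoeff_natCast, Ppoly.coeff_eq_zero_of_lt _ _ hnm, mul_zero]

lemma Acoeff_natCast_succ_succ (n m : ℕ) :
    Acoeff g (fun k => (k : ℝ)) (n + 1) (m + 1) =
      ∑ k ∈ range (n + 1), g (k + 1) * n.descFactorial k * Acoeff g (fun k => (k : ℝ)) (n - k) m := by
  rw [Acoeff_natCast, Ppoly.coeff_succ_succ, mul_sum, mul_sum]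
  refine sum_congr rfl fun k hk => ?_
  have hkn : k ≤ n := Nat.lt_succ_iff.mp (mem_range.mp hk)
  rw [Acoeff_natCast, Nat.factorial_succ, ← Nat.factorial_mul_descFactorial hkn]
  push_cast
  field_simp

end NatCast

lemma Nat.succ_descFactorial_eq_add (n j : ℕ) :
    (n + 1).descFactorial j = n.descFactorial j + j * n.descFactorial (j - 1) := by
  rcases j with _ | i
  · simp
  rw [Nat.succ_descFactorial_succ, Nat.descFactorial_succ, Nat.add_sub_cancel, ← add_mul]
  rcases le_or_gt i n with hi | hi
  · congr 1
    omega
  · simp [Nat.descFactorial_eq_zero_iff_lt.mpr hi]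

noncomputable def prodInvPartialSums (l : List ℕ) : ℝ :=
  ∏ k ∈ Icc 1 l.length, ((k : ℝ) + ((l.take k).sum : ℝ))⁻¹

lemma prodInvPartialSums_append_singleton (l : List ℕ) (a : ℕ) :
    prodInvPartialSums (l ++ [a]) * ((l.length + 1 : ℝ) + (l.sum + a)) = prodInvPartialSums l := by
  rw [prodInvPartialSums, List.length_append, List.length_singleton,
    prod_Icc_succ_top (by omega), List.take_of_length_le (by simp), prodInvPartialSums,
    mul_assoc, ← prod_congr rfl fun k hk => by rw [List.take_append_of_le_length (mem_Icc.mp hk).2]]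
  simp only [List.sum_append, List.sum_singleton, Nat.cast_add, Nat.cast_one]
  rw [add_assoc, inv_mul_cancel₀ (by positivity), mul_one]

lemma GCal_append_singleton (g : ℕ → ℝ) (l : List ℕ) (k : ℕ) :
    GCal g (l ++ [k]) = GCal g l * g (k + 1) := by
  simp [GCal]

lemma GCal_mul_prodInvPartialSums_append_singleton (g : ℕ → ℝ) (l : List ℕ) (k : ℕ) :
    GCal g (l ++ [k]) * prodInvPartialSums (l ++ [k]) * (((l.sum + k : ℕ) : ℝ) + (l ++ [k]).length) =
      GCal g l * prodInvPartialSums l * g (k + 1) := by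
  rw [GCal_append_singleton, ← prodInvPartialSums_append_singleton l k, List.length_append,
    List.length_singleton]
  push_cast
  ring

def compositionLists (t : ℕ) : Finset (List ℕ) :=
  univ.image (Composition.blocks : Composition t → List ℕ)

lemma mem_compositionLists {t : ℕ} {l : List ℕ} :
    l ∈ compositionLists t ↔ (∀ a ∈ l, 0 < a) ∧ l.sum = t := by
  refine ⟨fun hl => ?_, fun ⟨hpos, hsum⟩ => mem_image.mpr ⟨⟨l, hpos _, hsum⟩, mem_univ _, rfl⟩⟩
  obtain ⟨c, -, rfl⟩ := mem_image.mp hl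
  exact ⟨fun _ => c.blocks_pos, c.blocks_sum⟩

lemma compositionLists_zero : compositionLists 0 = {[]} := by
  ext l
  simp only [mem_compositionLists, mem_singleton]
  constructor
  · rintro ⟨hpos, hsum⟩
    exact List.eq_nil_iff_forall_not_mem.mpr fun a ha =>
      (hpos a ha).ne' (List.sum_eq_zero_iff.mp hsum a ha)
  · rintro rfl
    simp

lemma sum_compositionLists_append_singleton {M : Type*} [AddCommMonoid M] (t : ℕ)
    (f : List ℕ → M) :
    ∑ k ∈ Icc 1 t, ∑ l ∈ compositionLists (t - k), f (l ++ [k]) =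
      ∑ l ∈ (compositionLists t).erase [], f l := by
  rw [sum_sigma']
  refine sum_bij (fun x _ => x.2 ++ [x.1]) ?_ ?_ ?_ (fun _ _ => rfl)
  · rintro ⟨k, l⟩ hx
    simp only [mem_sigma, mem_Icc, mem_compositionLists] at hx
    simp only [mem_erase, mem_compositionLists, List.mem_append, List.mem_singleton,
      List.sum_append, List.sum_singleton, ne_eq, List.append_eq_nil_iff, List.cons_ne_self,
      and_false, not_false_eq_true, true_and]
    exact ⟨fun a ha => ha.elim (hx.2.1 a) (fun h => h ▸ hx.1.1), by omega⟩
  · rintro ⟨k, l⟩ - ⟨k', l'⟩ - h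
    obtain ⟨rfl, hk⟩ := List.append_inj' h rfl
    simp_all
  · intro l hl
    obtain ⟨hne, hpos, hsum⟩ := by simpa [mem_compositionLists] using hl
    obtain ⟨l, k, rfl⟩ := (List.eq_nil_or_concat l).resolve_left hne
    simp only [List.concat_eq_append, List.mem_append, List.mem_singleton,
      List.sum_append, List.sum_singleton] at hpos hsum
    refine ⟨⟨k, l⟩, ?_, (List.concat_eq_append ..).symm⟩
    simp only [mem_sigma, mem_Icc, mem_compositionLists]
    exact ⟨⟨hpos k (Or.inr rfl), by omega⟩, fun a ha => hpos a (Or.inl ha), by omega⟩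

lemma mem_permutations_parts_toList {t : ℕ} (μ : Nat.Partition t) (l : List ℕ) :
    l ∈ μ.parts.toList.permutations.toFinset ↔ (l : Multiset ℕ) = μ.parts := by
  rw [List.mem_toFinset, List.mem_permutations, ← Multiset.coe_eq_coe, Multiset.coe_toList]

lemma sum_compositionLists_eq_sum_partitions {M : Type*} [AddCommMonoid M] (t : ℕ)
    (f : List ℕ → M) :
    ∑ l ∈ compositionLists t, f l =
      ∑ μ : Nat.Partition t, ∑ l ∈ μ.parts.toList.permutations.toFinset, f l := by
  classical
  have hunion : compositionLists t = univ.biUnion fun μ : Nat.Partition t =>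
      μ.parts.toList.permutations.toFinset := by
    ext l
    simp only [mem_biUnion, mem_univ, true_and, mem_permutations_parts_toList,
      mem_compositionLists]
    constructor
    · rintro ⟨hpos, hsum⟩
      exact ⟨⟨l, fun hi => hpos _ hi, hsum⟩, rfl⟩
    · rintro ⟨μ, hμ⟩
      refine ⟨fun a ha => μ.parts_pos (hμ ▸ Multiset.mem_coe.mpr ha), ?_⟩
      rw [← Multiset.sum_coe, hμ, μ.parts_sum]
  rw [hunion, sum_biUnion]
  intro μ _ ν _ hμν
  refine disjoint_left.mpr fun l hμ hν => hμν (Nat.Partition.ext ?_)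
  rw [← (mem_permutations_parts_toList μ l).mp hμ, (mem_permutations_parts_toList ν l).mp hν]

noncomputable def weightedCompositionSum (g : ℕ → ℝ) (n t : ℕ) : ℝ :=
  ∑ l ∈ compositionLists t, GCal g l * prodInvPartialSums l * (n.descFactorial (t + l.length) : ℝ)

lemma sum_Icc_mul_weightedCompositionSum_sub (g : ℕ → ℝ) (n t : ℕ) :
    ∑ k ∈ Icc 1 t, g (k + 1) * n.descFactorial k * weightedCompositionSum g (n - k) (t - k) =
      ∑ l ∈ compositionLists t, GCal g l * prodInvPartialSums l * (t + l.length) *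
        n.descFactorial (t + l.length - 1) := by
  set F : List ℕ → ℝ := fun l =>
    GCal g l * prodInvPartialSums l * (t + l.length) * n.descFactorial (t + l.length - 1)
  have hterm : ∀ k ∈ Icc 1 t, ∀ l ∈ compositionLists (t - k),
      g (k + 1) * n.descFactorial k *
        (GCal g l * prodInvPartialSums l * (n - k).descFactorial (t - k + l.length)) =
        F (l ++ [k]) := by
    intro k hk l hl
    have hkt := (mem_Icc.mp hk).2
    have hsum := (mem_compositionLists.mp hl).2
    have hdesc : (n - k).descFactorial (t - k + l.length) * n.descFactorial k =
        n.descFactorial (t + (l ++ [k]).length - 1) := by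
      rw [← Nat.descFactorial_mul_descFactorial (by simp; omega : k ≤ t + (l ++ [k]).length - 1)]
      congr 2
      simp
      omega
    have hweight := GCal_mul_prodInvPartialSums_append_singleton g l k
    rw [show l.sum + k = t by omega] at hweight
    simp only [F]
    rw [← hdesc, Nat.cast_mul, hweight]
    ring
  calc _ = ∑ k ∈ Icc 1 t, ∑ l ∈ compositionLists (t - k), F (l ++ [k]) :=
        sum_congr rfl fun k hk => by
          rw [weightedCompositionSum, mul_sum]; exact sum_congr rfl (hterm k hk)
    _ = ∑ l ∈ (compositionLists t).erase [], F l := sum_compositionLists_append_singleton t F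
    _ = ∑ l ∈ compositionLists t, F l := by
      refine sum_subset (erase_subset _ _) fun l hl hl' => ?_
      obtain rfl : l = [] := by simpa [hl] using hl'
      obtain rfl : 0 = t := by simpa [mem_compositionLists] using hl
      simp [F]

lemma weightedCompositionSum_succ (g : ℕ → ℝ) (hg : g 1 = 1) (n t : ℕ) :
    weightedCompositionSum g (n + 1) t =
      ∑ k ∈ range (t + 1), g (k + 1) * n.descFactorial k * weightedCompositionSum g (n - k) (t - k) := by
  rw [range_eq_Ico, sum_eq_sum_Ico_succ_bot (by omega : 0 < t + 1), zero_add,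
    Ico_add_one_right_eq_Icc, sum_Icc_mul_weightedCompositionSum_sub, weightedCompositionSum,
    weightedCompositionSum]
  simp only [hg, Nat.descFactorial_zero, Nat.sub_zero, Nat.cast_one, one_mul,
    ← sum_add_distrib, Nat.succ_descFactorial_eq_add]
  refine sum_congr rfl fun l _ => ?_
  push_cast
  ring

lemma Acoeff_natCast_eq_weightedCompositionSum (g : ℕ → ℝ) (hg : g 1 = 1) (m t : ℕ) :
    Acoeff g (fun k => (k : ℝ)) (m + t) m = weightedCompositionSum g (m + t) t := by
  induction m generalizing t with
  | zero =>
    rw [zero_add, Acoeff_natCast_zero, weightedCompositionSum]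
    rcases t with _ | t
    · simp [compositionLists_zero, GCal, prodInvPartialSums]
    · refine (sum_eq_zero fun l hl => ?_).symm
      have hne : l ≠ [] := by
        rintro rfl
        simp [mem_compositionLists] at hl
      rw [Nat.descFactorial_eq_zero_iff_lt.mpr (by simpa [Nat.pos_iff_ne_zero] using hne),
        Nat.cast_zero, mul_zero]
  | succ m ih =>
    rw [show m + 1 + t = m + t + 1 by omega, Acoeff_natCast_succ_succ,
      weightedCompositionSum_succ g hg,
      ← sum_subset (range_subset_range.mpr (by omega : t + 1 ≤ m + t + 1))]
    · refine sum_congr rfl fun k hk => ?_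
      rw [show m + t - k = m + (t - k) by simp at hk; omega, ih]
    · intro k hkN hk
      rw [Acoeff_natCast_eq_zero_of_lt _ (by simp at hkN hk; omega), mul_zero]

theorem coefficients_h_id_general (g : ℕ → ℝ) (hg : g 1 = 1)
    (n m : ℕ) (hmn : m < n) :
    Acoeff g (fun k => (k : ℝ)) n m =
      ∑ μ : Nat.Partition (n - m),
        GCal g μ.parts.toList *
          (∏ k ∈ Finset.range (μ.parts.sum + Multiset.card μ.parts), ((n : ℝ) - (k : ℝ))) *
          ∑ lam ∈ μ.parts.toList.permutations.toFinset,
            ∏ k ∈ Finset.Icc 1 lam.length, ((k : ℝ) + ((lam.take k).sum : ℝ))⁻¹ := by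
  have h := Acoeff_natCast_eq_weightedCompositionSum g hg m (n - m)
  rw [Nat.add_sub_cancel' hmn.le] at h
  rw [h, weightedCompositionSum, sum_compositionLists_eq_sum_partitions]
  refine sum_congr rfl fun μ _ => ?_
  rw [mul_sum]
  refine sum_congr rfl fun l hlμ => ?_
  have hl : (l : Multiset ℕ) = μ.parts := (mem_permutations_parts_toList μ l).mp hlμ
  have hperm : l.Perm μ.parts.toList := by
    rw [← Multiset.coe_eq_coe, Multiset.coe_toList, hl]
  rw [GCal, GCal, ← (hperm.map _).prod_eq, μ.parts_sum, ← hl, Multiset.coe_card,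
    prod_range_natCast_sub, ← Nat.descFactorial_eq_prod_range, prodInvPartialSums]
  ring

/-- Theorem 2: for `h = id`,
`A_{n,m}^{g,id} = Σ_{μ ⊢ n-m} 𝓖(μ) · ∏_{k=0}^{|μ|+ℓ(μ)-1}(n-k) ·
  Σ_{λ ∈ Orb(μ)} ∏_{k=1}^{ℓ(λ)} (k + Σ_{i=1}^k λ_i)⁻¹`. -/
theorem coefficients_h_id (g : ℕ → ℝ) (hg : g 1 = 1)
    (n m : ℕ) (hm1 : 1 ≤ m) (hmn : m < n) :
    Acoeff g (fun k => (k : ℝ)) n m =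
      ∑ μ : Nat.Partition (n - m),
        GCal g μ.parts.toList *
          (∏ k ∈ Finset.range (μ.parts.sum + Multiset.card μ.parts), ((n : ℝ) - (k : ℝ))) *
          ∑ lam ∈ μ.parts.toList.permutations.toFinset,
            ∏ k ∈ Finset.Icc 1 lam.length, ((k : ℝ) + ((lam.take k).sum : ℝ))⁻¹ :=
  coefficients_h_id_general g hg n m hmn
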